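/- arXiv:2108.00844 — 5 statements merged into one kernel-verified Lean document; each statement's English description precedes it below -/
import Mathlib

section
/- For every integer n ≥ 1, let e_n be the real number defined by |Σ_{k=n}^∞ (−1)^k s_k| = (s_n/(1+ε)) · (1 + a₁/n + a₂/n² + e_n·ε/n³). Then 0.3216 < e_n < 0.6704. -/
open Real Filter

/-- `S = 13591409/545140134` from the Chudnovsky series. -/
noncomputable def S : ℝ := 13591409 / 545140134

/-- `ε = 1728/640320³ = 53360⁻³`. -/
noncomputable def eps : ℝ := 1728 / 640320 ^ 3

/-- The terms `s_k = (6k)!/((3k)!·(k!)³) · (k+S)/640320^{3k}` of the Chudnovsky series. -/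
noncomputable def s (k : ℕ) : ℝ :=
  (Nat.factorial (6 * k) : ℝ) / ((Nat.factorial (3 * k) : ℝ) * (Nat.factorial k : ℝ) ^ 3)
    * ((k : ℝ) + S) / 640320 ^ (3 * k)

/-- `a₁ = ε/(2(1+ε))`. -/
noncomputable def a1 : ℝ := eps / (2 * (1 + eps))

/-- `a₂ = S·ε/(1+ε) − (23ε − 4ε²)/(36(1+ε)²)`. -/
noncomputable def a2 : ℝ :=
  S * eps / (1 + eps) - (23 * eps - 4 * eps ^ 2) / (36 * (1 + eps) ^ 2)

/-!
With `T n = ∑_{k ≥ 0} (-1)^k s_{n+k}` we have `T n = s n - T (n+1)`, and `s (k+1) = R k · s k`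
for an explicit rational function `R ≤ ε`. The approximation
`g(x) = (1 + a₁/x + a₂/x² + a₃/x³)/(1+ε)` of `T n / s n` satisfies the same recursion up to the
defect `d(x) = 1 - g(x) - R(x) g(x+1)`, and `a₃` is chosen so that `-¾ε/x⁴ ≤ d(x) ≤ 0` for
`x ≥ 1`. Hence the remainder `E n = T n - g(n) s n` obeys `E n = d(n) s n - E (n+1)`; summing
the geometric bounds gives `|E n| ≤ ε s n / n⁴`, and `d ≤ 0` sharpens this to
`E n ≤ ε² s n / n⁴`. Since `e ε = a₃ + (1+ε) n³ E n / s n`, this pins `e` near `a₃/ε ≈ 0.6703`.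
The resulting lower bound needs `n ≥ 3`; for `n = 1, 2` the alternating-series bound
`T n ≥ s n - s (n+1)` suffices.
-/

open Topology

lemma S_pos : 0 < S := by norm_num [S]

lemma eps_pos : 0 < eps := by norm_num [eps]

lemma eps_le_quarter : eps ≤ 1 / 4 := by norm_num [eps]

noncomputable def ratio (x : ℝ) : ℝ :=
  eps * ((6 * x + 1) * (2 * x + 1) * (6 * x + 5) * (x + 1 + S)) / (72 * (x + 1) ^ 3 * (x + S))

lemma s_pos (k : ℕ) : 0 < s k := by
  have := S_pos
  unfold s
  positivity

lemma s_succ (k : ℕ) : s (k + 1) = ratio k * s k := by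
  have : (0 : ℝ) < k + S := by linarith [S_pos, k.cast_nonneg (α := ℝ)]
  unfold s
  rw [show 6 * (k + 1) = 6 * k + 6 by ring, show 3 * (k + 1) = 3 * k + 3 by ring]
  simp only [ratio, eps, Nat.factorial_succ, Nat.cast_mul, Nat.cast_add, Nat.cast_ofNat,
    Nat.cast_one, pow_succ, pow_mul]
  field_simp
  ring

lemma ratio_le_eps {x : ℝ} (hx : 1 ≤ x) : ratio x ≤ eps := by
  obtain ⟨t, ht, rfl⟩ : ∃ t, 0 ≤ t ∧ x = 1 + t := ⟨x - 1, by linarith, by ring⟩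
  rw [← sub_nonneg]
  simp only [ratio, S, eps]
  field_simp
  ring_nf
  positivity

lemma s_succ_le {k : ℕ} (hk : 1 ≤ k) : s (k + 1) ≤ eps * s k := by
  rw [s_succ]
  exact mul_le_mul_of_nonneg_right (ratio_le_eps (by exact_mod_cast hk)) (s_pos k).le

lemma s_add_le {n : ℕ} (hn : 1 ≤ n) (k : ℕ) : s (n + k) ≤ eps ^ k * s n := by
  induction k with
  | zero => simp
  | succ k ih =>
    calc s (n + (k + 1)) ≤ eps * s (n + k) := s_succ_le (k := n + k) (by omega)
      _ ≤ eps * (eps ^ k * s n) := mul_le_mul_of_nonneg_left ih eps_pos.le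
      _ = eps ^ (k + 1) * s n := by ring

lemma tendsto_s : Tendsto s atTop (𝓝 0) := by
  rw [← tendsto_add_atTop_iff_nat 1]
  have hgeom : Tendsto (fun k : ℕ => eps ^ k * s 1) atTop (𝓝 0) := by
    simpa using (tendsto_pow_atTop_nhds_zero_of_lt_one eps_pos.le
      (by linarith [eps_le_quarter])).mul_const (s 1)
  refine squeeze_zero (fun k => (s_pos _).le) (fun k => ?_) hgeom
  simpa [add_comm] using s_add_le le_rfl k

noncomputable def tail (n : ℕ) : ℝ := ∑' k : ℕ, (-1 : ℝ) ^ k * s (n + k)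

lemma summable_tail {n : ℕ} (hn : 1 ≤ n) :
    Summable fun k : ℕ => (-1 : ℝ) ^ k * s (n + k) := by
  refine Summable.of_norm_bounded
    ((summable_geometric_of_lt_one eps_pos.le (by linarith [eps_le_quarter])).mul_right (s n))
    fun k => ?_
  rw [norm_mul, norm_pow, norm_neg, norm_one, one_pow, one_mul, Real.norm_eq_abs,
    abs_of_pos (s_pos _)]
  exact s_add_le hn k

lemma tail_eq_sub_tail_succ {n : ℕ} (hn : 1 ≤ n) : tail n = s n - tail (n + 1) := by
  rw [tail, (summable_tail hn).tsum_eq_zero_add, tail, sub_eq_add_neg, ← tsum_neg]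
  congr 1
  · simp
  · congr 1
    ext k
    rw [pow_succ, show n + (k + 1) = n + 1 + k by ring]
    ring

lemma antitone_s_add {n : ℕ} (hn : 1 ≤ n) : Antitone fun k => s (n + k) :=
  antitone_nat_of_succ_le fun k =>
    (s_succ_le (k := n + k) (by omega)).trans
      (mul_le_of_le_one_left (s_pos _).le (by linarith [eps_le_quarter]))

lemma tendsto_sum_range_tail {n : ℕ} (hn : 1 ≤ n) :
    Tendsto (fun K => ∑ k ∈ Finset.range K, (-1 : ℝ) ^ k * s (n + k)) atTop (𝓝 (tail n)) :=
  (summable_tail hn).hasSum.tendsto_sum_nat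

lemma s_sub_s_succ_le_tail {n : ℕ} (hn : 1 ≤ n) : s n - s (n + 1) ≤ tail n := by
  simpa [Finset.sum_range_succ, sub_eq_add_neg] using
    (antitone_s_add hn).alternating_series_le_tendsto (tendsto_sum_range_tail hn) 1

lemma tail_le_s {n : ℕ} (hn : 1 ≤ n) : tail n ≤ s n := by
  simpa using (antitone_s_add hn).tendsto_le_alternating_series (tendsto_sum_range_tail hn) 0

lemma tail_nonneg {n : ℕ} (hn : 1 ≤ n) : 0 ≤ tail n :=
  (sub_nonneg.mpr (antitone_s_add hn (Nat.zero_le 1))).trans (s_sub_s_succ_le_tail hn)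

lemma tendsto_tail : Tendsto tail atTop (𝓝 0) :=
  squeeze_zero' (eventually_atTop.mpr ⟨1, fun _ hn => tail_nonneg hn⟩)
    (eventually_atTop.mpr ⟨1, fun _ hn => tail_le_s hn⟩) tendsto_s

lemma abs_tsum_eq_tail {n : ℕ} (hn : 1 ≤ n) :
    |∑' k : ℕ, (-1 : ℝ) ^ (n + k) * s (n + k)| = tail n := by
  have h : ∑' k : ℕ, (-1 : ℝ) ^ (n + k) * s (n + k) = (-1) ^ n * tail n := by
    rw [tail, ← tsum_mul_left]
    simp_rw [pow_add, mul_assoc]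
  rw [h, abs_mul, abs_pow, abs_neg, abs_one, one_pow, one_mul, abs_of_nonneg (tail_nonneg hn)]

/-- The coefficient that makes the defect `O(x⁻⁴)`. -/
noncomputable def a3 : ℝ :=
  -(S ^ 2 * eps / (1 + eps)) - 3 * S * eps * (1 - eps) / (2 * (1 + eps) ^ 2)
    + eps * (17 - 30 * eps - 2 * eps ^ 2) / (24 * (1 + eps) ^ 3)

noncomputable def tailApprox (x : ℝ) : ℝ := (1 + a1 / x + a2 / x ^ 2 + a3 / x ^ 3) / (1 + eps)

noncomputable def defect (x : ℝ) : ℝ := 1 - tailApprox x - ratio x * tailApprox (x + 1)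

lemma tendsto_tailApprox : Tendsto tailApprox atTop (𝓝 (1 / (1 + eps))) := by
  have hpow (a : ℝ) {i : ℕ} (hi : i ≠ 0) : Tendsto (fun x : ℝ => a / x ^ i) atTop (𝓝 0) :=
    tendsto_const_nhds.div_atTop (tendsto_pow_atTop hi)
  have h := (((tendsto_const_nhds (x := (1 : ℝ))).add
    ((tendsto_const_nhds (x := a1)).div_atTop tendsto_id)).add
    (hpow a2 two_ne_zero)).add (hpow a3 three_ne_zero) |>.div_const (1 + eps)
  rw [add_zero, add_zero, add_zero] at h
  exact h

/- Here and in `ratio_le_eps`, substituting `x = 1 + t` and clearing denominators leaves a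
polynomial in `t` with positive coefficients. -/

lemma defect_nonpos {x : ℝ} (hx : 1 ≤ x) : defect x ≤ 0 := by
  obtain ⟨t, ht, rfl⟩ : ∃ t, 0 ≤ t ∧ x = 1 + t := ⟨x - 1, by linarith, by ring⟩
  rw [← neg_nonneg]
  simp only [defect, tailApprox, ratio, a1, a2, a3, S, eps]
  field_simp
  ring_nf
  positivity

lemma neg_le_defect {x : ℝ} (hx : 1 ≤ x) : -(3 / 4 * eps / x ^ 4) ≤ defect x := by
  obtain ⟨t, ht, rfl⟩ : ∃ t, 0 ≤ t ∧ x = 1 + t := ⟨x - 1, by linarith, by ring⟩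
  rw [neg_le_iff_add_nonneg']
  simp only [defect, tailApprox, ratio, a1, a2, a3, S, eps]
  field_simp
  ring_nf
  positivity

lemma abs_defect_le {x : ℝ} (hx : 1 ≤ x) : |defect x| ≤ 3 / 4 * eps / x ^ 4 :=
  abs_le.mpr ⟨neg_le_defect hx, (defect_nonpos hx).trans (by have := eps_pos; positivity)⟩

lemma le_tsum_of_le_add_succ {v c : ℕ → ℝ} {m : ℕ} (hc : Summable c)
    (hv : Tendsto v atTop (𝓝 0)) (h : ∀ k, v (m + k) ≤ c k + v (m + k + 1)) :
    v m ≤ ∑' k, c k := by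
  have hpartial (K : ℕ) : v m ≤ ∑ k ∈ Finset.range K, c k + v (m + K) := by
    induction K with
    | zero => simp
    | succ K ih => rw [Finset.sum_range_succ, ← add_assoc m]; linarith [h K]
  have hshift : Tendsto (fun K => v (m + K)) atTop (𝓝 0) := by
    simpa [add_comm] using (tendsto_add_atTop_iff_nat m).mpr hv
  simpa using ge_of_tendsto' (hc.hasSum.tendsto_sum_nat.add hshift) hpartial

noncomputable def remainder (n : ℕ) : ℝ := tail n - tailApprox n * s n

lemma remainder_eq_defect_mul_sub {n : ℕ} (hn : 1 ≤ n) :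
    remainder n = defect n * s n - remainder (n + 1) := by
  rw [remainder, remainder, defect, tail_eq_sub_tail_succ hn, s_succ, Nat.cast_succ]
  ring

lemma tendsto_remainder : Tendsto remainder atTop (𝓝 0) := by
  have h := tendsto_tail.sub ((tendsto_tailApprox.comp tendsto_natCast_atTop_atTop).mul tendsto_s)
  rw [mul_zero, sub_zero] at h
  exact h

lemma abs_remainder_le {m : ℕ} (hm : 1 ≤ m) : |remainder m| ≤ eps / m ^ 4 * s m := by
  have := eps_pos
  set X := eps / (m : ℝ) ^ 4 * s m with hX
  have hgeom : Summable fun k : ℕ => 3 / 4 * X * eps ^ k :=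
    (summable_geometric_of_lt_one eps_pos.le (by linarith [eps_le_quarter])).mul_left _
  have hstep (k : ℕ) : |remainder (m + k)| ≤ 3 / 4 * X * eps ^ k + |remainder (m + k + 1)| := by
    have hmk : (1 : ℝ) ≤ ((m + k : ℕ) : ℝ) := by exact_mod_cast (show 1 ≤ m + k by omega)
    have hdef : |defect (m + k : ℕ)| ≤ 3 / 4 * eps / (m : ℝ) ^ 4 :=
      (abs_defect_le hmk).trans (by gcongr; linarith [k.cast_nonneg (α := ℝ)])
    calc |remainder (m + k)| ≤ |defect (m + k : ℕ)| * s (m + k) + |remainder (m + k + 1)| := by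
          rw [remainder_eq_defect_mul_sub (by omega)]
          exact (abs_sub _ _).trans_eq (by rw [abs_mul, abs_of_pos (s_pos _)])
      _ ≤ 3 / 4 * eps / (m : ℝ) ^ 4 * (eps ^ k * s m) + |remainder (m + k + 1)| := by
          gcongr ?_ + _
          exact mul_le_mul hdef (s_add_le hm k) (s_pos _).le (by positivity)
      _ = 3 / 4 * X * eps ^ k + |remainder (m + k + 1)| := by rw [hX]; ring
  calc |remainder m| ≤ ∑' k, 3 / 4 * X * eps ^ k :=
        le_tsum_of_le_add_succ (v := fun k => |remainder k|) hgeom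
          (by simpa using tendsto_remainder.abs) hstep
    _ = 3 / 4 * X / (1 - eps) := by
        rw [tsum_mul_left, tsum_geometric_of_lt_one eps_pos.le (by linarith [eps_le_quarter])]
        ring
    _ ≤ X := by
        have : 0 ≤ X := by have := s_pos m; positivity
        rw [div_le_iff₀ (by linarith [eps_le_quarter])]
        nlinarith [eps_le_quarter]

lemma remainder_le {n : ℕ} (hn : 1 ≤ n) : remainder n ≤ eps ^ 2 / n ^ 4 * s n := by
  have hn' : (1 : ℝ) ≤ n := by exact_mod_cast hn
  have := eps_pos
  calc remainder n ≤ |remainder (n + 1)| := by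
        rw [remainder_eq_defect_mul_sub hn]
        linarith [mul_nonpos_of_nonpos_of_nonneg (defect_nonpos hn') (s_pos n).le,
          neg_abs_le (remainder (n + 1))]
    _ ≤ eps / ((n + 1 : ℕ) : ℝ) ^ 4 * s (n + 1) := abs_remainder_le (by omega)
    _ ≤ eps / (n : ℝ) ^ 4 * (eps * s n) := by
        gcongr
        · exact (s_pos _).le
        · linarith
        · exact s_succ_le hn
    _ = eps ^ 2 / n ^ 4 * s n := by ring

lemma one_sub_ratio_sub_tailApprox_mul_le {n : ℕ} (hn : 1 ≤ n) :
    (1 - ratio n - tailApprox n) * s n ≤ remainder n := by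
  have := s_sub_s_succ_le_tail hn
  rw [s_succ] at this
  rw [remainder]
  linarith

lemma mul_eps_eq_of_tail_eq {n : ℕ} (hn : 1 ≤ n) {e : ℝ}
    (he : tail n = s n / (1 + eps) * (1 + a1 / n + a2 / n ^ 2 + e * eps / n ^ 3)) :
    e * eps = a3 + (1 + eps) * n ^ 3 * (remainder n / s n) := by
  have : (n : ℝ) ≠ 0 := by positivity
  have := (s_pos n).ne'
  have := eps_pos
  rw [remainder, he, tailApprox]
  field_simp
  ring

theorem truncation_error_expansion (n : ℕ) (hn : 1 ≤ n) (e : ℝ)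
    (he : |∑' k : ℕ, (-1 : ℝ) ^ (n + k) * s (n + k)| =
      s n / (1 + eps) *
        (1 + a1 / (n : ℝ) + a2 / (n : ℝ) ^ 2 + e * eps / (n : ℝ) ^ 3)) :
    0.3216 < e ∧ e < 0.6704 := by
  have hn' : (1 : ℝ) ≤ n := by exact_mod_cast hn
  have hs := s_pos n
  have heps := eps_pos
  have hcoef := mul_eps_eq_of_tail_eq hn (abs_tsum_eq_tail hn ▸ he)
  constructor
  · refine lt_of_mul_lt_mul_right (hcoef ▸ ?_) heps.le
    rcases lt_or_ge n 3 with hsmall | hlarge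
    · have hlow := (le_div_iff₀ hs).mpr (one_sub_ratio_sub_tailApprox_mul_le hn)
      calc 0.3216 * eps < a3 + (1 + eps) * n ^ 3 * (1 - ratio n - tailApprox n) := by
            interval_cases n <;> norm_num [ratio, tailApprox, a1, a2, a3, S, eps]
        _ ≤ _ := by gcongr
    · have hlow : -(eps / n ^ 4) ≤ remainder n / s n :=
        (le_div_iff₀ hs).mpr (by linarith [neg_abs_le (remainder n), abs_remainder_le hn])
      have hn3 : (3 : ℝ) ≤ n := by exact_mod_cast hlarge
      calc 0.3216 * eps < a3 - (1 + eps) * eps / 3 := by norm_num [a3, S, eps]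
        _ ≤ a3 - (1 + eps) * eps / n := by gcongr
        _ = a3 + (1 + eps) * n ^ 3 * -(eps / n ^ 4) := by field_simp; ring
        _ ≤ _ := by gcongr
  · refine lt_of_mul_lt_mul_right (hcoef ▸ ?_) heps.le
    have hup : remainder n / s n ≤ eps ^ 2 / n ^ 4 := (div_le_iff₀ hs).mpr (remainder_le hn)
    calc a3 + (1 + eps) * n ^ 3 * (remainder n / s n)
        ≤ a3 + (1 + eps) * n ^ 3 * (eps ^ 2 / n ^ 4) := by gcongr
      _ = a3 + (1 + eps) * eps ^ 2 / n := by field_simp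
      _ ≤ a3 + (1 + eps) * eps ^ 2 := by gcongr; exact div_le_self (by positivity) hn'
      _ < 0.6704 * eps := by norm_num [a3, S, eps]
end

section
/- For every real R with 0 < R < 1, as n → ∞ one has ((1/2)_n · (R)_n · (1−R)_n / (n!)³) · (π·n)^{3/2} / sin(π·R) = 1 + O(1/n); in particular there exists a constant C > 0 such that for all n ≥ 1, |((1/2)_n · (R)_n · (1−R)_n / (n!)³) · (π·n)^{3/2} / sin(π·R) − 1| ≤ C/n. -/
/-! By Euler's limit formula, `(a)_n ~ n! n^(a-1) / Γ(a)`, so the normalised product tends to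
`π^(3/2) / (Γ(1/2) Γ(R) Γ(1-R) sin πR) = 1` by `Γ(1/2) = √π` and the reflection formula.
Its consecutive ratios are `1 + O(1/n²)`: the `1/n` terms of the three Pochhammer factors cancel
against those of `(1 + 1/n)^(3/2)`. Summing the tail of these log-ratios bounds the logarithm of
the product by `O(1/n)`, hence the product itself differs from `1` by `O(1/n)`. -/

open Real Filter Asymptotics

/-- The Pochhammer symbol (rising factorial) `(a)_n = a(a+1)⋯(a+n−1)`. -/
noncomputable def poch (a : ℝ) (n : ℕ) : ℝ := (ascPochhammer ℝ n).eval a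

open scoped Nat Topology

theorem poch_succ (a : ℝ) (n : ℕ) : poch a (n + 1) = poch a n * (a + n) := by
  simp [poch, ascPochhammer_succ_right]

theorem poch_pos {a : ℝ} (ha : 0 < a) (n : ℕ) : 0 < poch a n :=
  ascPochhammer_pos n a ha

theorem poch_eq_prod_range (a : ℝ) (n : ℕ) : poch a n = ∏ j ∈ Finset.range n, (a + j) := by
  induction n with
  | zero => simp [poch]
  | succ n ih => rw [poch_succ, ih, Finset.prod_range_succ]

theorem GammaSeq_eq_div_poch (a : ℝ) (n : ℕ) :
    GammaSeq a n = (n : ℝ) ^ a * n ! / poch a (n + 1) := by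
  rw [GammaSeq, poch_eq_prod_range]

theorem tendsto_poch_div_factorial_mul_rpow {a : ℝ} (ha : 0 < a) :
    Tendsto (fun n : ℕ => poch a n / n ! * (n : ℝ) ^ (1 - a)) atTop (𝓝 (Gamma a)⁻¹) := by
  have h := ((GammaSeq_tendsto_Gamma a).inv₀ (Gamma_pos_of_pos ha).ne').mul
    (tendsto_natCast_div_add_atTop a)
  rw [mul_one] at h
  refine h.congr' ?_
  filter_upwards [eventually_gt_atTop 0] with n hn
  have hn : (0 : ℝ) < n := by exact_mod_cast hn
  have : (0 : ℝ) < poch a n := poch_pos ha n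
  rw [GammaSeq_eq_div_poch, poch_succ, rpow_sub hn, rpow_one]
  field_simp
  ring

noncomputable def pochProductRatio (R : ℝ) (n : ℕ) : ℝ :=
  poch (1 / 2) n * poch R n * poch (1 - R) n / (n ! : ℝ) ^ 3 * (π * n) ^ ((3 : ℝ) / 2) /
    sin (π * R)

theorem sin_pi_mul_pos {R : ℝ} (hR0 : 0 < R) (hR1 : R < 1) : 0 < sin (π * R) :=
  sin_pos_of_pos_of_lt_pi (by positivity) (by nlinarith [pi_pos])

theorem pochProductRatio_eq (R : ℝ) (n : ℕ) :
    pochProductRatio R n = (poch (1 / 2) n / n ! * (n : ℝ) ^ (1 - 1 / 2 : ℝ)) *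
      (poch R n / n ! * (n : ℝ) ^ (1 - R)) * (poch (1 - R) n / n ! * (n : ℝ) ^ (1 - (1 - R))) *
      (π ^ ((3 : ℝ) / 2) / sin (π * R)) := by
  have hn : (0 : ℝ) ≤ n := n.cast_nonneg
  have hpow : (n : ℝ) ^ ((3 : ℝ) / 2) =
      (n : ℝ) ^ (1 - 1 / 2 : ℝ) * (n : ℝ) ^ (1 - R) * (n : ℝ) ^ (1 - (1 - R)) := by
    rw [mul_assoc, ← rpow_add' hn (by ring_nf; norm_num), ← rpow_add' hn (by ring_nf; norm_num)]
    ring_nf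
  rw [pochProductRatio, mul_rpow pi_pos.le hn, hpow]
  ring

theorem tendsto_pochProductRatio {R : ℝ} (hR0 : 0 < R) (hR1 : R < 1) :
    Tendsto (pochProductRatio R) atTop (𝓝 1) := by
  have h := (((tendsto_poch_div_factorial_mul_rpow one_half_pos).mul
    (tendsto_poch_div_factorial_mul_rpow hR0)).mul
    (tendsto_poch_div_factorial_mul_rpow (sub_pos.2 hR1))).mul_const
    (π ^ ((3 : ℝ) / 2) / sin (π * R))
  have hlim : (Gamma (1 / 2))⁻¹ * (Gamma R)⁻¹ * (Gamma (1 - R))⁻¹ *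
      (π ^ ((3 : ℝ) / 2) / sin (π * R)) = 1 := by
    have hpi : π ^ ((3 : ℝ) / 2) = √π * π := by
      rw [sqrt_eq_rpow, ← rpow_add_one pi_pos.ne']
      norm_num
    have hs := (sin_pi_mul_pos hR0 hR1).ne'
    rw [mul_assoc _ (Gamma R)⁻¹, ← mul_inv, Gamma_mul_Gamma_one_sub, Gamma_one_half_eq, hpi]
    field_simp
  rw [hlim] at h
  exact h.congr fun n => (pochProductRatio_eq R n).symm

theorem pochProductRatio_pos {R : ℝ} (hR0 : 0 < R) (hR1 : R < 1) {n : ℕ} (hn : 0 < n) :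
    0 < pochProductRatio R n := by
  have := poch_pos one_half_pos n
  have := poch_pos hR0 n
  have := poch_pos (sub_pos.2 hR1) n
  have := sin_pi_mul_pos hR0 hR1
  unfold pochProductRatio
  positivity

theorem pochProductRatio_succ (R : ℝ) {n : ℕ} (hn : 0 < n) :
    pochProductRatio R (n + 1) = pochProductRatio R n *
      ((1 - 1 / 2 * (1 / (n + 1))) * (1 - (1 - R) * (1 / (n + 1))) * (1 - R * (1 / (n + 1))) *
        (1 + 1 / (n : ℝ)) ^ ((3 : ℝ) / 2)) := by
  have hn : (0 : ℝ) < n := by exact_mod_cast hn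
  have hpow : (π * ((n : ℝ) + 1)) ^ ((3 : ℝ) / 2) =
      (π * n) ^ ((3 : ℝ) / 2) * (1 + 1 / (n : ℝ)) ^ ((3 : ℝ) / 2) := by
    rw [← mul_rpow (by positivity) (by positivity)]
    congr 1
    field_simp
  rw [pochProductRatio, pochProductRatio, poch_succ, poch_succ, poch_succ, Nat.factorial_succ]
  push_cast
  rw [hpow]
  field_simp
  ring

theorem abs_log_one_sub_add_self_le {t : ℝ} (ht : t ≤ 1 / 2) :
    |log (1 - t) + t| ≤ 2 * t ^ 2 := by
  have hpos : 0 < 1 - t := by linarith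
  have hupper := log_le_sub_one_of_pos hpos
  -- `1 - (1 - t)⁻¹ = -t - t² / (1 - t)` and `1 - t ≥ 1 / 2`
  have hlower : -t - 2 * t ^ 2 ≤ 1 - (1 - t)⁻¹ := by
    rw [← one_div, le_sub_iff_add_le, ← le_sub_iff_add_le', div_le_iff₀ hpos]
    nlinarith [sq_nonneg t]
  rw [abs_le]
  constructor <;> nlinarith [one_sub_inv_le_log_of_pos hpos, sq_nonneg t]

theorem abs_log_pochProductRatio_succ_sub_le {R : ℝ} (hR0 : 0 < R) (hR1 : R < 1) {n : ℕ}
    (hn : 0 < n) :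
    |log (pochProductRatio R (n + 1)) - log (pochProductRatio R n)| ≤ 8 / (n : ℝ) ^ 2 := by
  have hn1 : (1 : ℝ) ≤ n := by exact_mod_cast hn
  have hn0 : (0 : ℝ) < n := by linarith
  have hprod := pochProductRatio_succ R hn
  set x : ℝ := 1 / (n + 1) with hx
  set y : ℝ := 1 / n with hy
  have hx0 : 0 < x := by positivity
  have hxy : x ≤ y := one_div_le_one_div_of_le hn0 (by linarith)
  have hyx : y - x = x * y := by rw [hx, hy]; field_simp; ring
  have hx2 : x ≤ 1 / 2 := by rw [hx, div_le_iff₀ (by positivity)]; linarith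
  have hpos : ∀ c : ℝ, 0 ≤ c → c ≤ 1 → 0 < 1 - c * x := fun c hc0 hc1 => by nlinarith
  have hdecomp : log (pochProductRatio R (n + 1)) - log (pochProductRatio R n) =
      log (1 - 1 / 2 * x) + log (1 - (1 - R) * x) + log (1 - R * x) + 3 / 2 * log (1 + y) := by
    have h1 := hpos (1 / 2) (by norm_num) (by norm_num)
    have h2 := hpos (1 - R) (by linarith) (by linarith)
    have h3 := hpos R hR0.le hR1.le
    rw [hprod, log_mul (pochProductRatio_pos hR0 hR1 hn).ne' (by positivity),
      log_mul (by positivity) (by positivity), log_mul (by positivity) h3.ne',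
      log_mul h1.ne' h2.ne', log_rpow (by positivity)]
    ring
  have hsmall : ∀ c : ℝ, 0 ≤ c → c ≤ 1 → c * x ≤ 1 / 2 := fun c hc0 hc1 => by
    nlinarith
  have e1 := abs_log_one_sub_add_self_le (hsmall (1 / 2) (by norm_num) (by norm_num))
  have e2 := abs_log_one_sub_add_self_le (hsmall (1 - R) (by linarith) (by linarith))
  have e3 := abs_log_one_sub_add_self_le (hsmall R hR0.le hR1.le)
  have e4 := abs_log_one_sub_add_self_le (t := -y) (by linarith)
  rw [sub_neg_eq_add] at e4
  rw [hdecomp, show (8 : ℝ) / (n : ℝ) ^ 2 = 8 * y ^ 2 by rw [hy]; ring]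
  rw [abs_le] at e1 e2 e3 e4 ⊢
  have hR2 : (1 - R) ^ 2 + R ^ 2 ≤ 1 := by nlinarith
  have hxx : x ^ 2 ≤ y ^ 2 := by nlinarith
  -- the first-order terms add up to `3 / 2 * (y - x) = 3 / 2 * x * y`
  constructor <;> nlinarith [mul_le_mul_of_nonneg_right hR2 (sq_nonneg x)]

theorem abs_sub_le_of_tendsto_of_abs_sub_succ_le {u v : ℕ → ℝ} {L : ℝ} {n : ℕ}
    (hu : Tendsto u atTop (𝓝 L)) (hv : Tendsto v atTop (𝓝 0))
    (huv : ∀ k ≥ n, |u (k + 1) - u k| ≤ v k - v (k + 1)) : |u n - L| ≤ v n := by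
  have htele : ∀ m ≥ n, |u n - u m| ≤ v n - v m := by
    intro m hm
    induction m, hm using Nat.le_induction with
    | base => simp
    | succ k hk ih =>
      calc |u n - u (k + 1)| ≤ |u n - u k| + |u (k + 1) - u k| := by
            rw [abs_sub_comm (u (k + 1))]; exact abs_sub_le _ _ _
        _ ≤ v n - v (k + 1) := by linarith [huv k hk]
  have hlim := ((tendsto_const_nhds (x := u n)).sub hu).abs
  have := le_of_tendsto_of_tendsto hlim (tendsto_const_nhds.sub hv)
    (eventually_atTop.2 ⟨n, htele⟩)
  rwa [sub_zero] at this

theorem abs_log_pochProductRatio_le {R : ℝ} (hR0 : 0 < R) (hR1 : R < 1) {n : ℕ} (hn : 0 < n) :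
    |log (pochProductRatio R n)| ≤ 16 / n := by
  have hlog : Tendsto (fun m => log (pochProductRatio R m)) atTop (𝓝 0) := by
    simpa using (tendsto_pochProductRatio hR0 hR1).log one_ne_zero
  have hv : Tendsto (fun m : ℕ => 16 / (m : ℝ)) atTop (𝓝 0) :=
    tendsto_const_div_atTop_nhds_zero_nat 16
  have := abs_sub_le_of_tendsto_of_abs_sub_succ_le hlog hv fun k hk => by
    have hk1 : (1 : ℝ) ≤ k := by exact_mod_cast hn.trans_le hk
    -- `8 / k² ≤ 16 / (k (k + 1)) = 16 / k - 16 / (k + 1)`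
    refine (abs_log_pochProductRatio_succ_sub_le hR0 hR1 (hn.trans_le hk)).trans ?_
    push_cast
    rw [div_sub_div _ _ (by positivity) (by positivity),
      div_le_div_iff₀ (by positivity) (by positivity)]
    nlinarith
  rwa [sub_zero] at this

theorem abs_exp_sub_one_le_mul_exp_abs (t : ℝ) : |exp t - 1| ≤ |t| * exp |t| := by
  rcases le_total 0 t with ht | ht
  · have h := mul_le_mul_of_nonneg_left (one_sub_le_exp_neg t) (exp_pos t).le
    rw [← exp_add, add_neg_cancel, exp_zero] at h
    rw [abs_of_nonneg ht, abs_of_nonneg (sub_nonneg.2 (one_le_exp ht))]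
    linarith
  · rw [abs_of_nonpos ht, abs_of_nonpos (sub_nonpos.2 (exp_le_one_iff.2 ht))]
    nlinarith [add_one_le_exp t, one_le_exp (neg_nonneg.2 ht)]

theorem abs_pochProductRatio_sub_one_le {R : ℝ} (hR0 : 0 < R) (hR1 : R < 1) {n : ℕ}
    (hn : 0 < n) : |pochProductRatio R n - 1| ≤ 16 * exp 16 / n := by
  have hn1 : (1 : ℝ) ≤ n := by exact_mod_cast hn
  have hlog := abs_log_pochProductRatio_le hR0 hR1 hn
  have hexp : exp |log (pochProductRatio R n)| ≤ exp 16 :=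
    exp_le_exp.2 (hlog.trans (div_le_self (by norm_num) hn1))
  calc |pochProductRatio R n - 1|
      = |exp (log (pochProductRatio R n)) - 1| := by
        rw [exp_log (pochProductRatio_pos hR0 hR1 hn)]
    _ ≤ |log (pochProductRatio R n)| * exp |log (pochProductRatio R n)| :=
        abs_exp_sub_one_le_mul_exp_abs _
    _ ≤ 16 / n * exp 16 := mul_le_mul hlog hexp (exp_pos _).le (by positivity)
    _ = 16 * exp 16 / n := by ring

theorem pochhammer_product_asymptotics (R : ℝ) (hR0 : 0 < R) (hR1 : R < 1) :
    (fun n : ℕ =>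
        poch (1 / 2) n * poch R n * poch (1 - R) n / (Nat.factorial n : ℝ) ^ 3 *
          (Real.pi * (n : ℝ)) ^ ((3 : ℝ) / 2) / Real.sin (Real.pi * R) - 1)
      =O[atTop] (fun n : ℕ => 1 / (n : ℝ)) ∧
    ∃ C > 0, ∀ n : ℕ, 1 ≤ n →
      |poch (1 / 2) n * poch R n * poch (1 - R) n / (Nat.factorial n : ℝ) ^ 3 *
          (Real.pi * (n : ℝ)) ^ ((3 : ℝ) / 2) / Real.sin (Real.pi * R) - 1| ≤ C / (n : ℝ) := by
  have hbound := fun n (hn : 1 ≤ n) => abs_pochProductRatio_sub_one_le hR0 hR1 hn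
  refine ⟨IsBigO.of_bound (16 * exp 16) ?_, 16 * exp 16, by positivity, hbound⟩
  filter_upwards [eventually_ge_atTop 1] with n hn
  rw [norm_eq_abs, norm_of_nonneg (by positivity), mul_one_div]
  exact hbound n hn
end

section
/- For every integer k ≥ 6 and every real R with 0 ≤ R ≤ 1, setting r = R(1−R), σ₁ = −1/8 − r, σ₃ = 1/192 + r²/6, and ϱ_k = (1/2 − (1/2)^k)/k + (R − R^k)/k + ((1−R) − (1−R)^k)/k + σ₁ + C(k−1,2)·σ₃ (where C(k−1,2) is the binomial coefficient), one has ϱ_k > 0. -/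
open Real

/-! Multiply by `k` and use `x ^ k ≤ x ^ 6` on `[0, 1]`: with `r = R(1 - R)` one has
`R ^ 6 + (1 - R) ^ 6 = 1 - 6r + 9r² - 2r³`, so `k ρ` is bounded below by a cubic in `k` with
coefficients polynomial in `r ≥ 0`, which is positive for `k ≥ 6`. -/

/-- At `x = 6` the cubic is `3/64 + r² + 2r³`, its `x`-derivative there is a quadratic in `r` with
negative discriminant, and the higher Taylor coefficients are positive multiples of `1/192 + r²/6`. -/
lemma cubic_pos_of_six_le (x r : ℝ) (hx : 6 ≤ x) (hr : 0 ≤ r) :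
    0 < 31 / 64 + 6 * r - 9 * r ^ 2 + 2 * r ^ 3 - x * (1 / 8 + r) +
      x * (x - 1) * (x - 2) / 2 * (1 / 192 + r ^ 2 / 6) := by
  obtain ⟨u, rfl⟩ : ∃ u : NNReal, x = u + 6 :=
    ⟨(x - 6).toNNReal, by rw [Real.coe_toNNReal _ (by linarith)]; ring⟩
  have taylor : 31 / 64 + 6 * r - 9 * r ^ 2 + 2 * r ^ 3 - (u + 6) * (1 / 8 + r) +
      (u + 6) * (u + 6 - 1) * (u + 6 - 2) / 2 * (1 / 192 + r ^ 2 / 6) =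
      (3 / 64 + r ^ 2 + 2 * r ^ 3) + u * (37 / 6 * (r - 3 / 37) ^ 2 + 193 / 7104) +
      u ^ 2 * (15 / 2 * (1 / 192 + r ^ 2 / 6)) + u ^ 3 * ((1 / 192 + r ^ 2 / 6) / 2) := by
    ring
  rw [taylor]
  positivity

lemma sub_pow_sum_ge_of_six_le {R : ℝ} (hR0 : 0 ≤ R) (hR1 : R ≤ 1) {k : ℕ} (hk : 6 ≤ k) :
    31 / 64 + 6 * (R * (1 - R)) - 9 * (R * (1 - R)) ^ 2 + 2 * (R * (1 - R)) ^ 3 ≤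
      (1 / 2 - (1 / 2 : ℝ) ^ k) + (R - R ^ k) + ((1 - R) - (1 - R) ^ k) := by
  have half_pow : (1 / 2 : ℝ) ^ k ≤ (1 / 2) ^ 6 := pow_le_pow_of_le_one (by norm_num) (by norm_num) hk
  have R_pow : R ^ k ≤ R ^ 6 := pow_le_pow_of_le_one hR0 hR1 hk
  have one_sub_R_pow : (1 - R) ^ k ≤ (1 - R) ^ 6 :=
    pow_le_pow_of_le_one (sub_nonneg.2 hR1) (sub_le_self 1 hR0) hk
  calc 31 / 64 + 6 * (R * (1 - R)) - 9 * (R * (1 - R)) ^ 2 + 2 * (R * (1 - R)) ^ 3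
      = (1 / 2 - (1 / 2 : ℝ) ^ 6) + (R - R ^ 6) + ((1 - R) - (1 - R) ^ 6) := by ring
    _ ≤ (1 / 2 - (1 / 2 : ℝ) ^ k) + (R - R ^ k) + ((1 - R) - (1 - R) ^ k) := by linarith

lemma cast_choose_pred_two {k : ℕ} (hk : 1 ≤ k) :
    ((k - 1).choose 2 : ℝ) = (k - 1) * (k - 2) / 2 := by
  rw [Nat.cast_choose_two, Nat.cast_sub hk]
  push_cast
  ring

theorem rho_positive (k : ℕ) (hk : 6 ≤ k) (R : ℝ) (hR0 : 0 ≤ R) (hR1 : R ≤ 1)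
    (r σ1 σ3 ρ : ℝ) (hr : r = R * (1 - R)) (h1 : σ1 = -1 / 8 - r)
    (h3 : σ3 = 1 / 192 + r ^ 2 / 6)
    (hρ : ρ = (1 / 2 - (1 / 2 : ℝ) ^ k) / (k : ℝ) + (R - R ^ k) / (k : ℝ) +
      ((1 - R) - (1 - R) ^ k) / (k : ℝ) + σ1 + (Nat.choose (k - 1) 2 : ℝ) * σ3) :
    0 < ρ := by
  have hk6 : (6 : ℝ) ≤ k := by exact_mod_cast hk
  have hr0 : 0 ≤ r := hr ▸ mul_nonneg hR0 (sub_nonneg.2 hR1)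
  have hρk : ρ = ((1 / 2 - (1 / 2 : ℝ) ^ k) + (R - R ^ k) + ((1 - R) - (1 - R) ^ k) +
      k * σ1 + k * (k - 1) * (k - 2) / 2 * σ3) / k := by
    rw [hρ, cast_choose_pred_two (by omega)]
    field_simp
  rw [hρk]
  refine div_pos ?_ (by positivity)
  have tail := sub_pow_sum_ge_of_six_le hR0 hR1 hk
  have cubic := cubic_pos_of_six_le k r hk6 hr0
  rw [← hr] at tail
  rw [h1, h3]
  linarith
end

section
/- For every integer k ≥ 8 and every real R with 0 ≤ R ≤ 1, setting r = R(1−R), σ₁ = −1/8 − r, σ₃ = 1/192 + r²/6, σ₅ = −1/640 − r²/30 − r³/15, and ϱ̃_k = (1/2 − (1/2)^k)/k + (R − R^k)/k + ((1−R) − (1−R)^k)/k + σ₁ + C(k−1,2)·σ₃ + C(k−1,4)·σ₅ (where C(m,j) is the binomial coefficient), one has ϱ̃_k < 0. -/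
/-!
Write `a_k = R^k + (1-R)^k`; the three leading summands of `ϱ̃_k` add up to `(3/2 - 2^{-k} - a_k)/k`.

For `k ≥ 12` this is at most `3/(2k) ≤ 1/8`. Since `6 C(n,4) = C(n,2) C(n-2,2)` and `C(n-2,2) ≥ 36`
for `n = k - 1 ≥ 11`, every coefficient of `σ₁ + C(n,2) σ₃ + C(n,4) σ₅ + 1/8` as a polynomial in `r`
is negative, so this part is below `-1/8`.

For `8 ≤ k ≤ 11` the symmetric power sum `a_k` is an explicit polynomial in `r = R(1-R) ∈ [0, 1/4]`,
and `ϱ̃_k < 0` becomes a linear inequality between the powers of `r`.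
-/

noncomputable def rhoTilde (k : ℕ) (R : ℝ) : ℝ :=
  let r := R * (1 - R)
  (3 / 2 - (1 / 2 : ℝ) ^ k - (R ^ k + (1 - R) ^ k)) / k + (-1 / 8 - r) +
    ((k - 1).choose 2 : ℝ) * (1 / 192 + r ^ 2 / 6) +
    ((k - 1).choose 4 : ℝ) * (-1 / 640 - r ^ 2 / 30 - r ^ 3 / 15)

lemma rhoTilde_leading_terms_le {k : ℕ} (hk : 0 < k) {R : ℝ} (hR0 : 0 ≤ R) (hR1 : R ≤ 1) :
    (3 / 2 - (1 / 2 : ℝ) ^ k - (R ^ k + (1 - R) ^ k)) / k ≤ 3 / 2 / k := by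
  have hpow : 0 ≤ (1 / 2 : ℝ) ^ k + R ^ k + (1 - R) ^ k := by
    have := pow_nonneg (sub_nonneg.2 hR1) k
    positivity
  exact div_le_div_of_nonneg_right (by linarith) (by positivity)

lemma sigma_sum_lt_neg_inv_eight {n : ℕ} (hn : 11 ≤ n) {r : ℝ} (hr : 0 ≤ r) :
    (-1 / 8 - r) + (n.choose 2 : ℝ) * (1 / 192 + r ^ 2 / 6) +
      (n.choose 4 : ℝ) * (-1 / 640 - r ^ 2 / 30 - r ^ 3 / 15) < -1 / 8 := by
  have hc4 : (n.choose 4 : ℝ) = n.choose 2 * (n - 2).choose 2 / 6 := by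
    rw [eq_div_iff (by norm_num)]
    exact_mod_cast Nat.choose_mul (n := n) (k := 4) (s := 2) (by norm_num)
  have hc : (0 : ℝ) < n.choose 2 := by exact_mod_cast Nat.choose_pos (by omega)
  have hd : (36 : ℝ) ≤ (n - 2).choose 2 := by
    exact_mod_cast Nat.choose_le_choose 2 (show 9 ≤ n - 2 by omega)
  rw [hc4]
  set c : ℝ := ((n.choose 2 : ℕ) : ℝ)
  set d : ℝ := (((n - 2).choose 2 : ℕ) : ℝ)
  have hcd : 0 ≤ c * (d - 36) := mul_nonneg hc.le (sub_nonneg.2 hd)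
  have hcr : 0 ≤ c * r ^ 2 := mul_nonneg hc.le (sq_nonneg r)
  have hcdr : 0 ≤ c * (d - 36) * r ^ 2 := mul_nonneg hcd (sq_nonneg r)
  have hcdr3 : 0 ≤ c * d * r ^ 3 := mul_nonneg (mul_nonneg hc.le (by linarith)) (pow_nonneg hr 3)
  linarith

lemma rhoTilde_neg_of_twelve_le {k : ℕ} (hk : 12 ≤ k) {R : ℝ} (hR0 : 0 ≤ R) (hR1 : R ≤ 1) :
    rhoTilde k R < 0 := by
  have hlead := rhoTilde_leading_terms_le (by omega : 0 < k) hR0 hR1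
  have hsigma := sigma_sum_lt_neg_inv_eight (by omega : 11 ≤ k - 1)
    (mul_nonneg hR0 (sub_nonneg.2 hR1))
  have hk12 : (12 : ℝ) ≤ k := by exact_mod_cast hk
  have hthree : 3 / 2 / (k : ℝ) ≤ 1 / 8 := by
    rw [div_le_iff₀ (by positivity)]
    linarith
  simp only [rhoTilde]
  linarith

lemma rhoTilde_neg_of_lt_twelve {k : ℕ} (hk8 : 8 ≤ k) (hk12 : k < 12) {R : ℝ} (hR0 : 0 ≤ R)
    (hR1 : R ≤ 1) : rhoTilde k R < 0 := by
  simp only [rhoTilde]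
  set r := R * (1 - R)
  have hr0 : 0 ≤ r := mul_nonneg hR0 (sub_nonneg.2 hR1)
  have hr_le : r ≤ 1 / 4 := by nlinarith [sq_nonneg (R - 1 / 2)]
  have hr5 : r ^ 5 ≤ r ^ 4 / 4 := by nlinarith [pow_nonneg hr0 4]
  have hr2 := pow_nonneg hr0 2
  have hr3 := pow_nonneg hr0 3
  have hr4 := pow_nonneg hr0 4
  interval_cases k
  · have ha : R ^ 8 + (1 - R) ^ 8 = 1 - 8 * r + 20 * r ^ 2 - 16 * r ^ 3 + 2 * r ^ 4 := by ring
    norm_num [Nat.choose, ha]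
    linarith
  · have ha : R ^ 9 + (1 - R) ^ 9 = 1 - 9 * r + 27 * r ^ 2 - 30 * r ^ 3 + 9 * r ^ 4 := by ring
    norm_num [Nat.choose, ha]
    linarith
  · have ha : R ^ 10 + (1 - R) ^ 10 =
        1 - 10 * r + 35 * r ^ 2 - 50 * r ^ 3 + 25 * r ^ 4 - 2 * r ^ 5 := by ring
    norm_num [Nat.choose, ha]
    linarith
  · have ha : R ^ 11 + (1 - R) ^ 11 =
        1 - 11 * r + 44 * r ^ 2 - 77 * r ^ 3 + 55 * r ^ 4 - 11 * r ^ 5 := by ring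
    norm_num [Nat.choose, ha]
    linarith

theorem rho_tilde_negative (k : ℕ) (hk : 8 ≤ k) (R : ℝ) (hR0 : 0 ≤ R) (hR1 : R ≤ 1)
    (r σ1 σ3 σ5 ρ : ℝ) (hr : r = R * (1 - R)) (h1 : σ1 = -1 / 8 - r)
    (h3 : σ3 = 1 / 192 + r ^ 2 / 6) (h5 : σ5 = -1 / 640 - r ^ 2 / 30 - r ^ 3 / 15)
    (hρ : ρ = (1 / 2 - (1 / 2 : ℝ) ^ k) / (k : ℝ) + (R - R ^ k) / (k : ℝ) +
      ((1 - R) - (1 - R) ^ k) / (k : ℝ) + σ1 + (Nat.choose (k - 1) 2 : ℝ) * σ3 +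
      (Nat.choose (k - 1) 4 : ℝ) * σ5) :
    ρ < 0 := by
  have hρ' : ρ = rhoTilde k R := by
    subst hρ h1 h3 h5 hr
    simp only [rhoTilde]
    ring
  rw [hρ']
  rcases lt_or_ge k 12 with hk12 | hk12
  · exact rhoTilde_neg_of_lt_twelve hk hk12 hR0 hR1
  · exact rhoTilde_neg_of_twelve_le hk12 hR0 hR1
end

section
/- For every integer n ≥ 1, let ẽ_n be the real number defined by Σ_{k=n}^∞ s̃_k = (s̃_n/(1 − 99⁻⁴)) · (1 − 1/(192119200·n) + 248104223/(36909787008640000·n²) − ẽ_n/n³). Then 3.558·10⁻⁹ < ẽ_n < 7.463·10⁻⁹. -/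
/-!
Write `G_c(x) = (1 - 1/(192119200 x) + 248104223/(36909787008640000 x²) - c/x³)/(1 - 99⁻⁴)`
and `F_c(k) = s̃_k G_c(k)`. Since `s̃_{k+1} = Q(k) s̃_k` with `Q` rational, the telescoping
inequality `s̃_k ≤ F_c(k) - F_c(k+1)` reduces to the polynomial inequality
`1 + Q(x) G_c(x+1) ≤ G_c(x)`; for `c = 3.5585·10⁻⁹` (and reversed for `c = 7.4628·10⁻⁹`) it holds
for `x = 1 + t`, `t ≥ 0`, because every coefficient of the resulting polynomial in `t` is positive.
Summing sandwiches the tail, `s̃_n G_{7.4628·10⁻⁹}(n) ≤ Σ_{k≥n} s̃_k ≤ s̃_n G_{3.5585·10⁻⁹}(n)`,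
and `G_c(n)` is strictly decreasing in `c`.
-/

open Real Filter

/-- `S̃ = 1103/26390` from Ramanujan's series. -/
noncomputable def Sr : ℝ := 1103 / 26390

/-- The terms `s̃_k = (4k)!/(k!)⁴ · (k+S̃)/396^{4k}` of Ramanujan's series. -/
noncomputable def sr (k : ℕ) : ℝ :=
  (Nat.factorial (4 * k) : ℝ) / (Nat.factorial k : ℝ) ^ 4 * ((k : ℝ) + Sr) / 396 ^ (4 * k)

open Topology

theorem summable_and_tsum_le_of_le_sub_succ {a F : ℕ → ℝ} (ha : ∀ k, 0 ≤ a k)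
    (hF : ∀ k, 0 ≤ F k) (h : ∀ k, a k ≤ F k - F (k + 1)) :
    Summable a ∧ ∑' k, a k ≤ F 0 := by
  have hpartial (m : ℕ) : ∑ k ∈ Finset.range m, a k ≤ F 0 := by
    calc ∑ k ∈ Finset.range m, a k
        ≤ ∑ k ∈ Finset.range m, (F k - F (k + 1)) := Finset.sum_le_sum fun k _ => h k
      _ = F 0 - F m := Finset.sum_range_sub' F m
      _ ≤ F 0 := sub_le_self _ (hF m)
  exact ⟨summable_of_sum_range_le ha hpartial, Real.tsum_le_of_sum_range_le ha hpartial⟩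

theorem le_tsum_of_sub_succ_le {a F : ℕ → ℝ} (ha : Summable a) (hF : Tendsto F atTop (𝓝 0))
    (h : ∀ k, F k - F (k + 1) ≤ a k) : F 0 ≤ ∑' k, a k := by
  have hpartial (m : ℕ) : F 0 - F m ≤ ∑ k ∈ Finset.range m, a k := by
    rw [← Finset.sum_range_sub' F m]
    exact Finset.sum_le_sum fun k _ => h k
  refine le_of_tendsto_of_tendsto' ?_ ha.hasSum.tendsto_sum_nat hpartial
  simpa using tendsto_const_nhds.sub hF

noncomputable def srRatio (x : ℝ) : ℝ :=
  (4 * x + 1) * (4 * x + 2) * (4 * x + 3) * (26390 * x + 27493) /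
    (64 * (x + 1) ^ 3 * (26390 * x + 1103) * 99 ^ 4)

theorem sr_pos (k : ℕ) : 0 < sr k := by
  unfold sr Sr
  positivity

theorem sr_succ (k : ℕ) : sr (k + 1) = srRatio k * sr k := by
  have hfac : ((4 * (k + 1)).factorial : ℝ) =
      (4 * k + 1) * (4 * k + 2) * (4 * k + 3) * (4 * k + 4) * (4 * k).factorial := by
    rw [show 4 * (k + 1) = 4 * k + 1 + 1 + 1 + 1 by ring]
    simp only [Nat.factorial_succ]
    push_cast
    ring
  unfold sr srRatio Sr
  rw [hfac, Nat.factorial_succ, pow_mul, pow_mul, pow_succ]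
  push_cast
  field_simp
  ring

noncomputable def tailFactor (c x : ℝ) : ℝ :=
  (1 - 1 / (192119200 * x) + 248104223 / (36909787008640000 * x ^ 2) - c / x ^ 3) /
    (1 - 1 / 99 ^ 4)

theorem tendsto_tailFactor_atTop (c : ℝ) :
    Tendsto (tailFactor c) atTop (𝓝 (1 - 1 / 99 ^ 4)⁻¹) := by
  have hpoly : Continuous fun y : ℝ =>
      (1 - y / 192119200 + 248104223 / 36909787008640000 * y ^ 2 - c * y ^ 3) /
        (1 - 1 / 99 ^ 4) := by
    fun_prop
  convert (hpoly.tendsto 0).comp tendsto_inv_atTop_zero using 2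
  · funext x
    simp only [Function.comp_apply, tailFactor]
    ring
  · norm_num

theorem tailFactor_le_tailFactor_iff {c d x : ℝ} (hx : 0 < x) :
    tailFactor c x ≤ tailFactor d x ↔ d ≤ c := by
  unfold tailFactor
  rw [div_le_div_iff_of_pos_right (by norm_num), sub_le_sub_iff_left,
    div_le_div_iff_of_pos_right (by positivity)]

theorem tailFactor_nonneg {c x : ℝ} (hc0 : 0 ≤ c) (hc : c ≤ 1 / 2) (hx : 1 ≤ x) :
    0 ≤ tailFactor c x := by
  have h1 : 1 / (192119200 * x) ≤ 1 / 192119200 :=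
    one_div_le_one_div_of_le (by norm_num) (by linarith)
  have h2 : c / x ^ 3 ≤ c := div_le_self hc0 (one_le_pow₀ hx)
  have h3 : 0 ≤ 248104223 / (36909787008640000 * x ^ 2) := by positivity
  unfold tailFactor
  apply div_nonneg _ (by norm_num)
  linarith

theorem one_add_srRatio_mul_tailFactor_le {x : ℝ} (hx : 1 ≤ x) :
    1 + srRatio x * tailFactor 3.5585e-9 (x + 1) ≤ tailFactor 3.5585e-9 x := by
  obtain ⟨t, ht, rfl⟩ : ∃ t, 0 ≤ t ∧ x = 1 + t := ⟨x - 1, by linarith, by ring⟩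
  unfold tailFactor srRatio
  rw [← sub_nonneg]
  field_simp
  ring_nf
  positivity

theorem tailFactor_le_one_add_srRatio_mul {x : ℝ} (hx : 1 ≤ x) :
    tailFactor 7.4628e-9 x ≤ 1 + srRatio x * tailFactor 7.4628e-9 (x + 1) := by
  obtain ⟨t, ht, rfl⟩ : ∃ t, 0 ≤ t ∧ x = 1 + t := ⟨x - 1, by linarith, by ring⟩
  unfold tailFactor srRatio
  rw [← sub_nonneg]
  field_simp
  ring_nf
  positivity

theorem sr_mul_tailFactor_sub_succ (c : ℝ) (k : ℕ) :
    sr k * tailFactor c k - sr (k + 1) * tailFactor c (k + 1 : ℕ) =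
      sr k + sr k * (tailFactor c k - (1 + srRatio k * tailFactor c (k + 1))) := by
  rw [sr_succ, Nat.cast_succ]
  ring

theorem summable_and_tsum_sr_le {c : ℝ} {n : ℕ} (hpos : ∀ k, n ≤ k → 0 ≤ tailFactor c k)
    (hstep : ∀ k : ℕ, n ≤ k → 1 + srRatio k * tailFactor c (k + 1) ≤ tailFactor c k) :
    Summable (fun k => sr (n + k)) ∧ ∑' k, sr (n + k) ≤ sr n * tailFactor c n := by
  refine summable_and_tsum_le_of_le_sub_succ (F := fun k => sr (n + k) * tailFactor c (n + k : ℕ))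
    (fun k => (sr_pos _).le)
    (fun k => mul_nonneg (sr_pos _).le (hpos _ (Nat.le_add_right n k))) fun k => ?_
  rw [← add_assoc, sr_mul_tailFactor_sub_succ, le_add_iff_nonneg_right]
  exact mul_nonneg (sr_pos _).le (sub_nonneg.2 (hstep _ (Nat.le_add_right n k)))

theorem sr_mul_tailFactor_le_tsum {c : ℝ} {n : ℕ} (hsum : Summable (fun k => sr (n + k)))
    (hstep : ∀ k : ℕ, n ≤ k → tailFactor c k ≤ 1 + srRatio k * tailFactor c (k + 1)) :
    sr n * tailFactor c n ≤ ∑' k, sr (n + k) := by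
  have hF : Tendsto (fun k => sr (n + k) * tailFactor c (n + k : ℕ)) atTop (𝓝 0) := by
    have := (tendsto_tailFactor_atTop c).comp
      (tendsto_natCast_atTop_atTop.comp (tendsto_add_atTop_nat n))
    simpa [add_comm] using hsum.tendsto_atTop_zero.mul this
  refine le_tsum_of_sub_succ_le hsum hF fun k => ?_
  rw [← add_assoc, sr_mul_tailFactor_sub_succ, add_le_iff_nonpos_right]
  exact mul_nonpos_of_nonneg_of_nonpos (sr_pos _).le
    (sub_nonpos.2 (hstep _ (Nat.le_add_right n k)))

theorem ramanujan_tail_expansion (n : ℕ) (hn : 1 ≤ n) (e : ℝ)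
    (he : (∑' k : ℕ, sr (n + k)) =
      sr n / (1 - 1 / 99 ^ 4) *
        (1 - 1 / (192119200 * (n : ℝ)) + 248104223 / (36909787008640000 * (n : ℝ) ^ 2) -
          e / (n : ℝ) ^ 3)) :
    3.558e-9 < e ∧ e < 7.463e-9 := by
  have hn1 : (1 : ℝ) ≤ n := by exact_mod_cast hn
  have hk1 {k : ℕ} (hk : n ≤ k) : (1 : ℝ) ≤ k := hn1.trans (by exact_mod_cast hk)
  have htail : ∑' k, sr (n + k) = sr n * tailFactor e n := by
    rw [he, tailFactor]
    ring
  obtain ⟨hsum, hle⟩ := summable_and_tsum_sr_le (c := 3.5585e-9)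
    (fun k hk => tailFactor_nonneg (by norm_num) (by norm_num) (hk1 hk))
    (fun k hk => by exact_mod_cast one_add_srRatio_mul_tailFactor_le (hk1 hk))
  have hge := sr_mul_tailFactor_le_tsum (c := 7.4628e-9) hsum
    (fun k hk => by exact_mod_cast tailFactor_le_one_add_srRatio_mul (hk1 hk))
  rw [htail] at hle hge
  have hn0 : (0 : ℝ) < n := zero_lt_one.trans_le hn1
  have hlo := (tailFactor_le_tailFactor_iff hn0).1 (le_of_mul_le_mul_left hle (sr_pos n))
  have hhi := (tailFactor_le_tailFactor_iff hn0).1 (le_of_mul_le_mul_left hge (sr_pos n))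
  constructor <;> norm_num at hlo hhi ⊢ <;> linarith
end
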